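/- Let n ≥ 4 be even, r_n = sqrt(sec(π/n)), m = (0,0,1)ᵀ, Φ_J = [[cos(π/n), sin(π/n), 0], [−sin(π/n), cos(π/n), 0], [0, 0, 1]], and for p ∈ [0,1] let W_p = p·Φ_J + (1−p)·m mᵀ. Consider the bipartite effect matrix E_ab = (1/2)·[[−cos(π/n), −sin(π/n), 0], [sin(π/n), −cos(π/n), 0], [0, 0, 1]]. Then: (i) Tr[E_abᵀ (ω_i ω_jᵀ)] ≥ 0 for all i, j ∈ {1,…,n}, so E_ab is nonnegative on every product state; (ii) Tr[E_abᵀ W_p] = (1 − 2p)/2, which is negative exactly when p > 1/2; (iii) consequently, for every p with 1/2 < p ≤ 1, the state W_p does not belong to the convex hull of the product states {ω_i ω_jᵀ : i, j ∈ {1,…,n}}, i.e., W_p is entangled (and mixed for p < 1). -/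
import Mathlib


open Real Matrix

/-- `r_n = sqrt(sec(π/n))`. -/
noncomputable def rpoly (n : ℕ) : ℝ := Real.sqrt (1 / Real.cos (Real.pi / n))

/-- Pure states of the `n`-gon model: `ω_i = (r_n cos(2πi/n), r_n sin(2πi/n), 1)ᵀ`. -/
noncomputable def omegaP (n i : ℕ) : Fin 3 → ℝ :=
  ![rpoly n * Real.cos (2 * Real.pi * i / n), rpoly n * Real.sin (2 * Real.pi * i / n), 1]

/-- The maximally mixed state `m = (0,0,1)ᵀ` of the `n`-gon. -/
noncomputable def mMix : Fin 3 → ℝ := ![0, 0, 1]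

/-- The maximally entangled state of the bipartite even `n`-gon model:
`Φ_J = [[cos(π/n), sin(π/n), 0], [−sin(π/n), cos(π/n), 0], [0,0,1]]`. -/
noncomputable def PhiJ (n : ℕ) : Matrix (Fin 3) (Fin 3) ℝ :=
  !![Real.cos (Real.pi / n), Real.sin (Real.pi / n), 0;
     -Real.sin (Real.pi / n), Real.cos (Real.pi / n), 0;
     0, 0, 1]

/-- The Werner-like state `W_p = p·Φ_J + (1−p)·m mᵀ` for even gons. -/
noncomputable def Weven (n : ℕ) (p : ℝ) : Matrix (Fin 3) (Fin 3) ℝ :=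
  p • PhiJ n + (1 - p) • vecMulVec mMix mMix

/-- The entangled effect
`E_ab = (1/2)·[[−cos(π/n), −sin(π/n), 0], [sin(π/n), −cos(π/n), 0], [0,0,1]]`. -/
noncomputable def Eab (n : ℕ) : Matrix (Fin 3) (Fin 3) ℝ :=
  (1 / 2 : ℝ) •
    !![-Real.cos (Real.pi / n), -Real.sin (Real.pi / n), 0;
       Real.sin (Real.pi / n), -Real.cos (Real.pi / n), 0;
       0, 0, 1]

/-- The product states `ω_i ω_jᵀ` of the bipartite `n`-gon. -/
def productStates (n : ℕ) : Set (Matrix (Fin 3) (Fin 3) ℝ) :=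
  {Φ | ∃ i ∈ Finset.Icc 1 n, ∃ j ∈ Finset.Icc 1 n, Φ = vecMulVec (omegaP n i) (omegaP n j)}


lemma sin_prod_nonneg (n : ℕ) (hn : 0 < n) (k : ℤ) :
    0 ≤ Real.sin (k * π / n) * Real.sin ((k + 1) * π / n) := by
  have hn0 : (0:ℝ) < n := by exact_mod_cast hn
  set q : ℤ := k / n with hq
  set r : ℤ := k % n with hr
  have hk : k = (n:ℤ) * q + r := (Int.mul_ediv_add_emod k n).symm
  have hr0 : 0 ≤ r := Int.emod_nonneg k (by exact_mod_cast hn.ne')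
  have hr1 : r < n := Int.emod_lt_of_pos k (by exact_mod_cast hn)
  have e1 : (k:ℝ) * π / n = r * π / n + q * π := by
    have : (k:ℝ) = n * q + r := by exact_mod_cast hk
    rw [this]; field_simp; ring
  have e2 : ((k:ℝ) + 1) * π / n = (r + 1) * π / n + q * π := by
    have : (k:ℝ) = n * q + r := by exact_mod_cast hk
    rw [this]; field_simp; ring
  rw [e1, e2, Real.sin_add_int_mul_pi, Real.sin_add_int_mul_pi]
  have h1 : 0 ≤ Real.sin ((r:ℝ) * π / n) := by
    apply Real.sin_nonneg_of_nonneg_of_le_pi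
    · positivity
    · rw [div_le_iff₀ hn0]
      have : (r:ℝ) ≤ n := by exact_mod_cast hr1.le
      nlinarith [Real.pi_pos]
  have h2 : 0 ≤ Real.sin (((r:ℝ) + 1) * π / n) := by
    apply Real.sin_nonneg_of_nonneg_of_le_pi
    · positivity
    · rw [div_le_iff₀ hn0]
      have : (r:ℝ) + 1 ≤ n := by exact_mod_cast hr1
      nlinarith [Real.pi_pos]
  have hq1 : ((-1:ℝ)^q) * ((-1:ℝ)^q) = 1 := by
    rw [← zpow_add₀ (by norm_num : (-1:ℝ) ≠ 0)]
    have : q + q = 2 * q := by ring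
    rw [this, _root_.zpow_mul]
    norm_num
  nlinarith [mul_nonneg h1 h2]

lemma cos_key (n : ℕ) (hn : 4 ≤ n) (k : ℤ) :
    (rpoly n)^2 * Real.cos ((2*k+1)*π/n) ≤ 1 := by
  have hn0 : (0:ℝ) < n := by positivity
  have hc : 0 < Real.cos (π/n) := by
    apply Real.cos_pos_of_mem_Ioo
    constructor
    · have : 0 < π / n := by positivity
      linarith [Real.pi_pos]
    · rw [div_lt_iff₀ hn0]
      have : (4:ℝ) ≤ n := by exact_mod_cast hn
      nlinarith [Real.pi_pos]
  have hr2 : (rpoly n)^2 = 1 / Real.cos (π/n) := by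
    rw [rpoly, Real.sq_sqrt (by positivity)]
  have key : Real.cos ((2*(k:ℝ)+1)*π/n) ≤ Real.cos (π/n) := by
    have hcc := Real.cos_sub_cos (π/n) ((2*(k:ℝ)+1)*π/n)
    have e1 : (π/n + (2*(k:ℝ)+1)*π/n)/2 = ((k:ℝ)+1)*π/n := by ring
    have e2 : (π/n - (2*(k:ℝ)+1)*π/n)/2 = -((k:ℝ)*π/n) := by ring
    rw [e1, e2, Real.sin_neg] at hcc
    have := sin_prod_nonneg n (by omega) k
    push_cast at this
    nlinarith [this]
  rw [hr2]
  have h1 : (0:ℝ) ≤ 1 / Real.cos (π/n) := by positivity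
  have := mul_le_mul_of_nonneg_left key h1
  have h2 : 1 / Real.cos (π/n) * Real.cos (π/n) = 1 := by
    field_simp
  push_cast at this ⊢
  linarith

lemma traceE_formula (n : ℕ) (u v : Fin 3 → ℝ) :
    ((Eab n)ᵀ * vecMulVec u v).trace =
      (1/2) * (-(Real.cos (π/n)) * u 0 * v 0 - Real.sin (π/n) * u 0 * v 1
        + Real.sin (π/n) * u 1 * v 0 - Real.cos (π/n) * u 1 * v 1 + u 2 * v 2) := by
  simp only [Eab, Matrix.trace, Matrix.diag, Matrix.mul_apply, Matrix.transpose_apply,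
    Fin.sum_univ_three, Matrix.vecMulVec_apply, Matrix.smul_apply, smul_eq_mul,
    Matrix.of_apply, Matrix.cons_val', Matrix.cons_val_zero, Matrix.cons_val_one,
    Matrix.head_cons, Matrix.empty_val', Matrix.cons_val_fin_one, Matrix.head_fin_const,
    Matrix.cons_val_two, Matrix.tail_cons]
  ring

lemma trace_prod_nonneg (n : ℕ) (hn : 4 ≤ n) (i j : ℕ) :
    0 ≤ ((Eab n)ᵀ * vecMulVec (omegaP n i) (omegaP n j)).trace := by
  have hkey := cos_key n hn ((i:ℤ) - j)
  have hang : ((2*(((i:ℤ) - j):ℤ)+1):ℝ)*π/n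
      = (2*π*i/n - 2*π*j/n) + π/n := by push_cast; ring
  push_cast at hang hkey
  rw [hang] at hkey
  rw [Real.cos_add, Real.cos_sub, Real.sin_sub] at hkey
  rw [traceE_formula]
  simp only [omegaP, Matrix.cons_val_zero, Matrix.cons_val_one, Matrix.head_cons,
    Matrix.cons_val_two, Matrix.tail_cons]
  nlinarith [hkey]

lemma trace_W (n : ℕ) (p : ℝ) : ((Eab n)ᵀ * Weven n p).trace = (1 - 2*p)/2 := by
  have hsc := Real.sin_sq_add_cos_sq (π/n)
  simp only [Weven, Eab, PhiJ, mMix, Matrix.trace, Matrix.diag, Matrix.mul_apply,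
    Matrix.transpose_apply, Fin.sum_univ_three, Matrix.vecMulVec_apply,
    Matrix.smul_apply, smul_eq_mul, Matrix.add_apply, Matrix.of_apply, Matrix.cons_val',
    Matrix.cons_val_zero, Matrix.cons_val_one, Matrix.head_cons, Matrix.empty_val',
    Matrix.cons_val_fin_one, Matrix.head_fin_const, Matrix.cons_val_two, Matrix.tail_cons]
  linear_combination (-p/1) * hsc

/-- for even `n ≥ 4`:
(i) `Tr[E_abᵀ(ω_i ω_jᵀ)] ≥ 0` on every product state;
(ii) `Tr[E_abᵀ W_p] = (1 − 2p)/2`, negative exactly when `p > 1/2`;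
(iii) for `1/2 < p ≤ 1`, `W_p` is not in the convex hull of the product states,
i.e., it is entangled (and mixed for `p < 1`). -/
theorem even_gon_werner_entangled (n : ℕ) (hn : 4 ≤ n) (heven : Even n) :
    (∀ i ∈ Finset.Icc 1 n, ∀ j ∈ Finset.Icc 1 n,
      0 ≤ ((Eab n)ᵀ * vecMulVec (omegaP n i) (omegaP n j)).trace) ∧
    (∀ p : ℝ, p ∈ Set.Icc (0 : ℝ) 1 →
      ((Eab n)ᵀ * Weven n p).trace = (1 - 2 * p) / 2 ∧
      (((Eab n)ᵀ * Weven n p).trace < 0 ↔ 1 / 2 < p)) ∧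
    (∀ p : ℝ, 1 / 2 < p → p ≤ 1 →
      Weven n p ∉ convexHull ℝ (productStates n)) := by

  refine ⟨fun i _ j _ => trace_prod_nonneg n hn i j, fun p _ => ?_, fun p hp _ hmem => ?_⟩
  · refine ⟨trace_W n p, ?_⟩
    rw [trace_W n p]
    constructor <;> intro h <;> linarith
  · have hlin : IsLinearMap ℝ (fun Φ : Matrix (Fin 3) (Fin 3) ℝ => ((Eab n)ᵀ * Φ).trace) := by
      constructor
      · intro x y; rw [Matrix.mul_add, Matrix.trace_add]
      · intro c x; rw [Matrix.mul_smul, Matrix.trace_smul]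
    have hsub : productStates n ⊆
        {Φ : Matrix (Fin 3) (Fin 3) ℝ | 0 ≤ ((Eab n)ᵀ * Φ).trace} := by
      rintro Φ ⟨i, _, j, _, rfl⟩
      exact trace_prod_nonneg n hn i j
    have hhull := convexHull_min hsub (convex_halfSpace_ge hlin 0) hmem
    have := trace_W n p
    simp only [Set.mem_setOf_eq] at hhull
    rw [this] at hhull
    linarith
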